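/- arXiv:1905.13740 — 2 statements merged into one kernel-verified Lean document; each statement's English description precedes it below -/
import Mathlib

section
/- Let (N, ⊴, c) be an instance of MinBudget and let S be a feasible schedule (a linear extension of ⊴) that minimizes the budget. Define N⁺ = {j : c_j ≥ 0}, N⁻ = {j : c_j < 0}, and the bipartite restriction ⊴₁ = ⊴ ∩ (N⁺ × N⁻). Then the minimum budget over feasible schedules of (N, ⊴, c) equals the minimum budget over feasible schedules of (N, ⊴₁, c). -/
open List

variable {ι : Type*} [DecidableEq ι]

/-- Total cost of a schedule (list of jobs). -/
def listCost (c : ι → ℝ) (S : List ι) : ℝ := (S.map c).sum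

/-- Budget of a schedule: maximum cost of a prefix (the empty prefix has cost 0). -/
def listBudget (c : ι → ℝ) : List ι → ℝ
  | [] => 0
  | j :: t => max 0 (c j + listBudget c t)

/-- Return of a schedule. -/
def listReturn (c : ι → ℝ) (S : List ι) : ℝ := listCost c S - listBudget c S

/-- `S` enumerates the finite job set `N` without repetition. -/
def IsScheduleOf (N : Finset ι) (S : List ι) : Prop :=
  S.Nodup ∧ ∀ j, j ∈ S ↔ j ∈ N

/-- `S` is a linear extension of the precedence relation `r` (restricted to its jobs). -/
def RespectsOrder (r : ι → ι → Prop) (S : List ι) : Prop :=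
  ∀ i j, r i j → i ∈ S → j ∈ S → S.idxOf i ≤ S.idxOf j

/-- Minimum budget over all feasible schedules of the job set `X`. -/
noncomputable def setBudget (r : ι → ι → Prop) (c : ι → ℝ) (X : Finset ι) : ℝ :=
  sInf {b | ∃ S : List ι, IsScheduleOf X S ∧ RespectsOrder r S ∧ listBudget c S = b}

/-- Total cost of a job set. -/
def setCost (c : ι → ℝ) (X : Finset ι) : ℝ := ∑ j ∈ X, c j

/-- Return of a job set. -/
noncomputable def setReturn (r : ι → ι → Prop) (c : ι → ℝ) (X : Finset ι) : ℝ :=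
  setCost c X - setBudget r c X

/-- The cbr-preorder on job sets. -/
def cbrLE (r : ι → ι → Prop) (c : ι → ℝ) (X Y : Finset ι) : Prop :=
  (setCost c X < 0 ∧ 0 ≤ setCost c Y) ∨
  (setCost c X < 0 ∧ setCost c Y < 0 ∧ setBudget r c X < setBudget r c Y) ∨
  (setCost c X < 0 ∧ setCost c Y < 0 ∧ setBudget r c X = setBudget r c Y ∧
    setReturn r c X ≤ setReturn r c Y) ∨
  (0 ≤ setCost c X ∧ 0 ≤ setCost c Y ∧ setReturn r c X ≤ setReturn r c Y)

/-- `J` is an ideal (downward-closed subset) of `r` restricted to `I`. -/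
def IsIdealIn (r : ι → ι → Prop) (I J : Finset ι) : Prop :=
  J ⊆ I ∧ ∀ j ∈ J, ∀ i ∈ I, r i j → i ∈ J

/-- `F` is a filter (upward-closed subset) of `r` restricted to `I`. -/
def IsFilterIn (r : ι → ι → Prop) (I F : Finset ι) : Prop :=
  F ⊆ I ∧ ∀ i ∈ F, ∀ j ∈ I, r i j → j ∈ F

/-- `I` is an interval of `r` on `N`: intersection of an ideal and a filter. -/
def IsIntervalIn (r : ι → ι → Prop) (N I : Finset ι) : Prop :=
  ∃ J F, IsIdealIn r N J ∧ IsFilterIn r N F ∧ I = J ∩ F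

/-- An irreducible interval: every ideal of the restricted order is `⪰` the interval. -/
def IsIrreducibleIn (r : ι → ι → Prop) (c : ι → ℝ) (N I : Finset ι) : Prop :=
  IsIntervalIn r N I ∧ ∀ J, IsIdealIn r I J → cbrLE r c I J

/-- A schedule (given as blocks `SS`) in increasing irreducible structure. -/
def IncIrrStructure (r : ι → ι → Prop) (c : ι → ℝ) (N : Finset ι)
    (SS : List (List ι)) : Prop :=
  IsScheduleOf N SS.flatten ∧ RespectsOrder r SS.flatten ∧
  (∀ S ∈ SS, IsIrreducibleIn r c N S.toFinset ∧ RespectsOrder r S ∧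
    listBudget c S = setBudget r c S.toFinset) ∧
  ∀ i j : Fin SS.length, i < j → cbrLE r c (SS.get i).toFinset (SS.get j).toFinset

/-! A schedule respecting only the bipartite restriction can be rearranged into one respecting the
whole order without increasing its budget. Moving a job to the front does not increase the budget
if the job has non-positive cost, or if every job it overtakes has non-negative cost. Such a job can
always be chosen minimal for the order: let `x` be the first job that is negative or minimal. If `x`
is not minimal, a minimal job below `x` is negative, because a non-negative one would be related to
`x` by the bipartite restriction and hence scheduled before `x`. Putting the chosen job first and
recursing on the remaining jobs yields a linear extension. -/

section Budget

variable {α : Type*} {c : α → ℝ}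

theorem listBudget_nonneg (c : α → ℝ) : ∀ S : List α, 0 ≤ listBudget c S
  | [] => le_rfl
  | _ :: _ => le_max_left _ _

theorem listBudget_cons_mono (x : α) {S T : List α} (h : listBudget c S ≤ listBudget c T) :
    listBudget c (x :: S) ≤ listBudget c (x :: T) :=
  max_le_max le_rfl (add_le_add_right h _)

theorem listBudget_swap_le {m w : α} (h : c m ≤ 0 ∨ 0 ≤ c w) (L : List α) :
    listBudget c (m :: w :: L) ≤ listBudget c (w :: m :: L) := by
  have := listBudget_nonneg c L
  simp only [listBudget]
  grind

theorem listBudget_move_front_le {m : α} {W : List α} (h : c m ≤ 0 ∨ ∀ w ∈ W, 0 ≤ c w)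
    (Q : List α) : listBudget c (m :: (W ++ Q)) ≤ listBudget c (W ++ m :: Q) := by
  induction W with
  | nil => exact le_rfl
  | cons w W ih =>
    calc listBudget c (m :: w :: (W ++ Q))
        ≤ listBudget c (w :: m :: (W ++ Q)) :=
          listBudget_swap_le (h.imp_right fun h => h w mem_cons_self) _
      _ ≤ listBudget c (w :: (W ++ m :: Q)) :=
          listBudget_cons_mono w (ih (h.imp_right fun h w hw => h w (mem_cons_of_mem _ hw)))

end Budget

section Exchange

variable {α : Type*} {r : α → α → Prop} {c : α → ℝ}

/-- The relation `⊴₁` of the paper. -/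
def bipartiteRestriction (r : α → α → Prop) (c : α → ℝ) (i j : α) : Prop :=
  r i j ∧ 0 ≤ c i ∧ c j < 0

theorem exists_minimal_le (hr : IsPartialOrder α r) {S : List α} {x : α} (hx : x ∈ S) :
    ∃ m ∈ S, r m x ∧ ∀ y ∈ S, r y m → y = m := by
  classical
  let _ : Preorder α := { le := r, le_refl := hr.refl, le_trans := hr.trans }
  obtain ⟨m, hmx, hm, hm_min⟩ := S.toFinset.exists_le_minimal (mem_toFinset.2 hx)
  refine ⟨m, mem_toFinset.1 hm, hmx, fun y hy hym => hr.antisymm _ _ hym ?_⟩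
  exact hm_min (mem_toFinset.2 hy) hym

theorem exists_minimal_movable_to_front (hr : IsPartialOrder α r) {S : List α} (hS : S ≠ [])
    (h₁ : S.Pairwise fun a b => ¬ bipartiteRestriction r c b a) :
    ∃ W m Q, S = W ++ m :: Q ∧ (∀ y ∈ S, r y m → y = m) ∧ (c m ≤ 0 ∨ ∀ w ∈ W, 0 ≤ c w) := by
  classical
  obtain ⟨x₀, hx₀⟩ := exists_mem_of_ne_nil S hS
  obtain ⟨m₀, hm₀, -, hm₀_min⟩ := exists_minimal_le hr hx₀
  obtain ⟨x, hfind⟩ := Option.isSome_iff_exists.1 <|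
    (find?_isSome (p := fun x => decide (c x < 0 ∨ ∀ y ∈ S, r y x → y = x))).2
      ⟨m₀, hm₀, decide_eq_true (Or.inr hm₀_min)⟩
  obtain ⟨hx, W, Q, hWQ, hW⟩ := find?_eq_some_iff_append.1 hfind
  simp only [decide_eq_true_eq, Bool.not_eq_eq_eq_not, Bool.not_true, decide_eq_false_iff_not,
    not_or, not_lt] at hx hW
  have hxS : x ∈ S := by simp [hWQ]
  obtain ⟨m, hm, hmx, hm_min⟩ := exists_minimal_le hr hxS
  by_cases hcm : c m ≤ 0
  · obtain ⟨W', Q', hm_split⟩ := append_of_mem hm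
    exact ⟨W', m, Q', hm_split, hm_min, Or.inl hcm⟩
  refine ⟨W, x, Q, hWQ, hx.resolve_left fun hcx => ?_, Or.inr fun w hw => (hW w hw).1⟩
  have hmx₁ : bipartiteRestriction r c m x := ⟨hmx, (not_le.1 hcm).le, hcx⟩
  rw [hWQ, pairwise_append, pairwise_cons] at h₁
  rw [hWQ, mem_append, mem_cons] at hm
  rcases hm with hmW | rfl | hmQ
  · exact (hW m hmW).2 hm_min
  · exact hcm hcx.le
  · exact h₁.2.1.1 m hmQ hmx₁

theorem exists_perm_pairwise_listBudget_le (hr : IsPartialOrder α r) (S : List α)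
    (hS : S.Nodup) (h₁ : S.Pairwise fun a b => ¬ bipartiteRestriction r c b a) :
    ∃ T, T.Perm S ∧ T.Pairwise (fun a b => ¬ r b a) ∧ listBudget c T ≤ listBudget c S := by
  induction hn : S.length generalizing S with
  | zero => exact ⟨[], by simp_all, Pairwise.nil, by simp_all⟩
  | succ n ih =>
    obtain ⟨W, m, Q, rfl, hm_min, hm_move⟩ :=
      exists_minimal_movable_to_front hr (ne_nil_of_length_eq_add_one hn) h₁
    have hsub : (W ++ Q).Sublist (W ++ m :: Q) := (sublist_cons_self m Q).append_left W
    obtain ⟨T, hTS, hT, hTb⟩ :=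
      ih (W ++ Q) (hS.sublist hsub) (h₁.sublist hsub) (by simp only [length_append, length_cons] at hn ⊢; omega)
    have hm : m ∉ W ++ Q := (nodup_cons.1 (perm_middle.nodup_iff.1 hS)).1
    refine ⟨m :: T, (hTS.cons m).trans perm_middle.symm, pairwise_cons.2 ⟨?_, hT⟩, ?_⟩
    · intro y hy hym
      have hyS : y ∈ W ++ Q := hTS.mem_iff.1 hy
      exact hm (hm_min y (hsub.subset hyS) hym ▸ hyS)
    · calc listBudget c (m :: T) ≤ listBudget c (m :: (W ++ Q)) := listBudget_cons_mono m hTb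
        _ ≤ listBudget c (W ++ m :: Q) := listBudget_move_front_le hm_move Q

theorem IsScheduleOf.perm {N : Finset α} {S T : List α} (hS : IsScheduleOf N S) (hTS : T.Perm S) :
    IsScheduleOf N T :=
  ⟨hTS.nodup_iff.2 hS.1, fun j => hTS.mem_iff.trans (hS.2 j)⟩

end Exchange

theorem respectsOrder_iff_pairwise {r : ι → ι → Prop} {S : List ι} (hS : S.Nodup) :
    RespectsOrder r S ↔ S.Pairwise fun a b => ¬ r b a := by
  rw [pairwise_iff_getElem]
  constructor
  · intro h i j hi hj hij hr
    have := h _ _ hr (getElem_mem _) (getElem_mem _)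
    rw [hS.idxOf_getElem, hS.idxOf_getElem] at this
    omega
  · intro h i j hr hi hj
    by_contra! hlt
    rw [← idxOf_lt_length_iff] at hi hj
    exact h _ _ hj hi hlt (by simpa only [getElem_idxOf] using hr)

theorem IsScheduleOf.exists_respectsOrder_listBudget_le {r : ι → ι → Prop} (hr : IsPartialOrder ι r)
    {c : ι → ℝ} {N : Finset ι} {S : List ι} (hS : IsScheduleOf N S)
    (h₁ : RespectsOrder (bipartiteRestriction r c) S) :
    ∃ T, IsScheduleOf N T ∧ RespectsOrder r T ∧ listBudget c T ≤ listBudget c S := by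
  obtain ⟨T, hTS, hT, hTb⟩ :=
    exists_perm_pairwise_listBudget_le hr S hS.1 ((respectsOrder_iff_pairwise hS.1).1 h₁)
  have hT' := hS.perm hTS
  exact ⟨T, hT', (respectsOrder_iff_pairwise hT'.1).2 hT, hTb⟩

theorem setBudget_le_of_forall_exists_le {r r' : ι → ι → Prop} {c : ι → ℝ} {X : Finset ι}
    (hne : ∃ S, IsScheduleOf X S ∧ RespectsOrder r' S)
    (h : ∀ S, IsScheduleOf X S → RespectsOrder r' S →
      ∃ T, IsScheduleOf X T ∧ RespectsOrder r T ∧ listBudget c T ≤ listBudget c S) :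
    setBudget r c X ≤ setBudget r' c X := by
  obtain ⟨S₀, hS₀, hS₀r⟩ := hne
  refine le_csInf ⟨_, S₀, hS₀, hS₀r, rfl⟩ ?_
  rintro _ ⟨S, hS, hSr, rfl⟩
  obtain ⟨T, hT, hTr, hTS⟩ := h S hS hSr
  have hbdd : BddBelow {b | ∃ S, IsScheduleOf X S ∧ RespectsOrder r S ∧ listBudget c S = b} :=
    ⟨0, by rintro _ ⟨S, -, -, rfl⟩; exact listBudget_nonneg c S⟩
  exact csInf_le_of_le hbdd ⟨T, hT, hTr, rfl⟩ hTS

theorem bipartite_reduction (r : ι → ι → Prop) (hr : IsPartialOrder ι r)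
    (c : ι → ℝ) (N : Finset ι) :
    setBudget r c N = setBudget (fun i j => r i j ∧ 0 ≤ c i ∧ c j < 0) c N := by
  -- With zero costs the bipartite restriction is empty, so any enumeration of `N` works.
  obtain ⟨S₀, hS₀, hS₀r, -⟩ :=
    IsScheduleOf.exists_respectsOrder_listBudget_le hr (c := 0) (S := N.toList)
      ⟨N.nodup_toList, fun _ => N.mem_toList⟩ fun _ _ h => absurd h.2.1 (not_le.2 h.2.2)
  apply le_antisymm
  · exact setBudget_le_of_forall_exists_le ⟨S₀, hS₀, fun i j h => hS₀r i j h.1⟩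
      fun S hS h₁ => hS.exists_respectsOrder_listBudget_le hr h₁
  · exact setBudget_le_of_forall_exists_le ⟨S₀, hS₀, hS₀r⟩
      fun S hS hSr => ⟨S, hS, fun i j h => hSr i j h.1, le_rfl⟩
end

section
/- Let I be an irreducible interval of a MinBudget instance (N, ⊴, c). Then every ideal J ⊆ I of ⊴_I with b(J) < b(I) satisfies c(J) ≥ 0. -/
open List

variable {ι : Type*} [DecidableEq ι]

theorem cbrLE.setCost_nonneg_of_setBudget_lt {r : ι → ι → Prop} {c : ι → ℝ} {X Y : Finset ι}
    (h : cbrLE r c X Y) (hb : setBudget r c Y < setBudget r c X) : 0 ≤ setCost c Y := by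
  rcases h with ⟨-, hY⟩ | ⟨-, -, hlt⟩ | ⟨-, -, heq, -⟩ | ⟨-, hY, -⟩
  · exact hY
  · exact absurd hlt hb.not_gt
  · exact absurd heq hb.ne'
  · exact hY

theorem irreducible_small_budget_ideal_general (r : ι → ι → Prop)
    (c : ι → ℝ) (N I : Finset ι) (hI : IsIrreducibleIn r c N I) :
    ∀ J, IsIdealIn r I J → setBudget r c J < setBudget r c I → 0 ≤ setCost c J :=
  fun J hJ hb => (hI.2 J hJ).setCost_nonneg_of_setBudget_lt hb

theorem irreducible_small_budget_ideal (r : ι → ι → Prop) (hr : IsPartialOrder ι r)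
    (c : ι → ℝ) (N I : Finset ι) (hI : IsIrreducibleIn r c N I) :
    ∀ J, IsIdealIn r I J → setBudget r c J < setBudget r c I → 0 ≤ setCost c J :=
  irreducible_small_budget_ideal_general r c N I hI
end
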